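/- Let Γ be a subgroup of the group of n×n permutation matrices, let x₀ ∈ {0,1}ⁿ with ‖x₀‖₀ = m ≥ 2, and let ω, ω' ∈ ℝ^q with corresponding Hopfield parameters θ, θ'. Suppose ⟨u_j(x₀), ω⟩ ≥ 1 for all j ∈ {1,…,n}, θ' ∈ Ψ(Γ), and ‖ω − ω'‖ ≤ 1/(4√m). Then E(x^{(j)}; θ) − E(x; θ) ≥ 1/2 for every x ∈ Orb(x₀, Γ) and every j ∈ {1,…,n}. -/
import Mathlib


open scoped BigOperators
open scoped Classical
open Matrix MeasureTheory

namespace HopfieldPaper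

/-- The space of (not necessarily admissible) Hopfield parameters `θ = (W, b)`. -/
abbrev Param (n : ℕ) := Matrix (Fin n) (Fin n) ℝ × (Fin n → ℝ)

variable {n : ℕ}

/-- `θ = (W, b)` is a Hopfield parameter: `W` is symmetric with zero diagonal. -/
def IsHopfieldParam (θ : Param n) : Prop :=
  θ.1.IsSymm ∧ ∀ i, θ.1 i i = 0

/-- `x ∈ {0,1}ⁿ`. -/
def IsBinary (x : Fin n → ℝ) : Prop := ∀ i, x i = 0 ∨ x i = 1

/-- Energy `E(x; θ) = (1/2)·xᵀWx + bᵀx`. -/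
noncomputable def energy (x : Fin n → ℝ) (θ : Param n) : ℝ :=
  (1 / 2) * (∑ i, ∑ j, x i * θ.1 i j * x j) + ∑ j, θ.2 j * x j

/-- `x^{(j)}`: the vector differing from `x` exactly in coordinate `j`. -/
noncomputable def flip (x : Fin n → ℝ) (j : Fin n) : Fin n → ℝ :=
  Function.update x j (1 - x j)

/-- The inner product on parameter space.  Under the identification of
`θ = (W, b)` with `ω = (√2·a, b) ∈ ℝ^q` (`a` the strictly upper-triangular
entries of `W`), the Euclidean inner product on `ℝ^q` corresponds to
`⟨θ, η⟩ = Σᵢⱼ Wᵢⱼ·W'ᵢⱼ + Σⱼ bⱼ·b'ⱼ`; in particular `‖ω‖² = ‖W‖_F² + ‖b‖²`. -/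
noncomputable def pInner (θ η : Param n) : ℝ :=
  (∑ i, ∑ j, θ.1 i j * η.1 i j) + ∑ j, θ.2 j * η.2 j

/-- The norm on parameter space: `‖ω‖ = √(‖W‖_F² + ‖b‖²)`. -/
noncomputable def pNorm (θ : Param n) : ℝ := Real.sqrt (pInner θ θ)

/-- The representer `u_j(x)`: the unique element of parameter space with
`⟨u_j(x), θ⟩ = E(x^{(j)}; θ) − E(x; θ)` for every Hopfield parameter `θ`. -/
noncomputable def uvec (x : Fin n → ℝ) (j : Fin n) : Param n :=
  (Matrix.of fun i l =>
      if i = j ∧ l ≠ j then (1 - 2 * x j) * x l / 2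
      else if l = j ∧ i ≠ j then (1 - 2 * x j) * x i / 2
      else 0,
   fun l => if l = j then 1 - 2 * x j else 0)

/-- `‖x‖₀`: the number of nonzero coordinates. -/
noncomputable def l0norm (x : Fin n → ℝ) : ℕ :=
  (Finset.univ.filter fun i => x i ≠ 0).card

/-- Action of a permutation matrix `Q` on parameters: `Qθ := (QᵀWQ, Qᵀb)`. -/
noncomputable def permAct (σ : Equiv.Perm (Fin n)) (θ : Param n) : Param n :=
  ((σ.permMatrix ℝ)ᵀ * θ.1 * σ.permMatrix ℝ, ((σ.permMatrix ℝ)ᵀ).mulVec θ.2)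

/-- `θ ∈ Ψ(Γ)`: `θ` is invariant under (the permutation matrices of) `Γ`. -/
noncomputable def InvariantUnder (Γ : Set (Equiv.Perm (Fin n))) (θ : Param n) : Prop :=
  ∀ σ ∈ Γ, permAct σ θ = θ

/-- `Orb(x, Γ) = {Q·x : Q ∈ Γ}` (`Q` the permutation matrix of `σ ∈ Γ`). -/
noncomputable def orb (Γ : Set (Equiv.Perm (Fin n))) (x : Fin n → ℝ) :
    Set (Fin n → ℝ) :=
  {y | ∃ σ ∈ Γ, y = ((σ.permMatrix ℝ)).mulVec x}

/- ------------- auxiliary lemmas ------------- -/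

lemma permMatrix_apply (σ : Equiv.Perm (Fin n)) (i j : Fin n) :
    σ.permMatrix ℝ i j = if σ i = j then 1 else 0 := by
  simp [Equiv.Perm.permMatrix, PEquiv.toMatrix_apply, Equiv.toPEquiv_apply]

lemma permMatrix_mulVec (σ : Equiv.Perm (Fin n)) (y : Fin n → ℝ) (i : Fin n) :
    (σ.permMatrix ℝ).mulVec y i = y (σ i) := by
  simp only [Matrix.mulVec, dotProduct, permMatrix_apply,
    ite_mul, one_mul, zero_mul, Finset.sum_ite_eq, Finset.mem_univ, if_true]

lemma permAct_fst (σ : Equiv.Perm (Fin n)) (θ : Param n) (i l : Fin n) :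
    (permAct σ θ).1 i l = θ.1 (σ⁻¹ i) (σ⁻¹ l) := by
  simp only [permAct, Matrix.mul_apply, Matrix.transpose_apply, permMatrix_apply,
    ite_mul, one_mul, zero_mul, mul_ite, mul_one, mul_zero]
  have h : ∀ a : Fin n, (σ a = l) = (a = σ⁻¹ l) := fun a => by
    simp [Equiv.apply_eq_iff_eq_symm_apply, Equiv.Perm.inv_def]
  have h' : ∀ a : Fin n, (σ a = i) = (a = σ⁻¹ i) := fun a => by
    simp [Equiv.apply_eq_iff_eq_symm_apply, Equiv.Perm.inv_def]
  simp_rw [h, h', Finset.sum_ite_eq', Finset.mem_univ, if_true]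

lemma permAct_snd (σ : Equiv.Perm (Fin n)) (θ : Param n) (i : Fin n) :
    (permAct σ θ).2 i = θ.2 (σ⁻¹ i) := by
  simp only [permAct, Matrix.mulVec, dotProduct, Matrix.transpose_apply,
    permMatrix_apply, ite_mul, one_mul, zero_mul]
  have h' : ∀ a : Fin n, (σ a = i) = (a = σ⁻¹ i) := fun a => by
    simp [Equiv.apply_eq_iff_eq_symm_apply, Equiv.Perm.inv_def]
  simp_rw [h', Finset.sum_ite_eq', Finset.mem_univ, if_true]

lemma energy_perm (σ : Equiv.Perm (Fin n)) (y : Fin n → ℝ) (θ : Param n) :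
    energy ((σ.permMatrix ℝ).mulVec y) θ = energy y (permAct σ θ) := by
  unfold energy
  congr 1
  · congr 1
    refine Fintype.sum_equiv σ _ _ fun i => ?_
    refine Fintype.sum_equiv σ _ _ fun l => ?_
    rw [permAct_fst, permMatrix_mulVec, permMatrix_mulVec]
    simp
  · refine Fintype.sum_equiv σ _ _ fun l => ?_
    rw [permAct_snd, permMatrix_mulVec]
    simp

lemma flip_perm (σ : Equiv.Perm (Fin n)) (y : Fin n → ℝ) (j : Fin n) :
    flip ((σ.permMatrix ℝ).mulVec y) j = (σ.permMatrix ℝ).mulVec (flip y (σ j)) := by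
  funext i
  by_cases h : i = j
  · subst h
    simp [flip, permMatrix_mulVec]
  · have h2 : ¬ σ i = σ j := fun hc => h (σ.injective hc)
    rw [flip, Function.update_of_ne h, permMatrix_mulVec, permMatrix_mulVec, flip,
      Function.update_of_ne h2]

/-- Representer property. -/
lemma pInner_uvec (x : Fin n → ℝ) (j : Fin n) (θ : Param n) (hθ : IsHopfieldParam θ) :
    pInner (uvec x j) θ = energy (flip x j) θ - energy x θ := by
  unfold pInner energy uvec
  have keyW : ∀ i l : Fin n,
      (Matrix.of fun i l =>
        if i = j ∧ l ≠ j then (1 - 2 * x j) * x l / 2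
        else if l = j ∧ i ≠ j then (1 - 2 * x j) * x i / 2
        else 0) i l * θ.1 i l
      = 1/2 * (flip x j i * θ.1 i l * flip x j l) - 1/2 * (x i * θ.1 i l * x l) := by
    intro i l
    simp only [Matrix.of_apply, flip, Function.update]
    by_cases hi : i = j <;> by_cases hl : l = j <;>
      simp [hi, hl, hθ.2]
    · ring
    · ring
  have keyb : ∀ l : Fin n,
      (if l = j then 1 - 2 * x j else 0) * θ.2 l
        = θ.2 l * flip x j l - θ.2 l * x l := by
    intro l
    simp only [flip, Function.update]
    by_cases hl : l = j <;> simp [hl] <;> ring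
  calc (∑ i, ∑ l, (Matrix.of fun i l =>
        if i = j ∧ l ≠ j then (1 - 2 * x j) * x l / 2
        else if l = j ∧ i ≠ j then (1 - 2 * x j) * x i / 2
        else 0) i l * θ.1 i l) + ∑ l, (if l = j then 1 - 2 * x j else 0) * θ.2 l
      = (∑ i, ∑ l, (1/2 * (flip x j i * θ.1 i l * flip x j l)
          - 1/2 * (x i * θ.1 i l * x l)))
        + ∑ l, (θ.2 l * flip x j l - θ.2 l * x l) := by
        congr 1
        · exact Finset.sum_congr rfl fun i _ => Finset.sum_congr rfl fun l _ => keyW i l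
        · exact Finset.sum_congr rfl fun l _ => keyb l
    _ = _ := by
        simp only [Finset.sum_sub_distrib, ← Finset.mul_sum]
        ring

lemma pInner_sub_right (u a b : Param n) :
    pInner u (a - b) = pInner u a - pInner u b := by
  unfold pInner
  simp only [Prod.fst_sub, Prod.snd_sub, Matrix.sub_apply, Pi.sub_apply, mul_sub,
    Finset.sum_sub_distrib]
  ring

/-- Cauchy–Schwarz. -/
lemma abs_pInner_le (a b : Param n) : |pInner a b| ≤ pNorm a * pNorm b := by
  have hself : ∀ c : Param n, 0 ≤ pInner c c := by
    intro c
    unfold pInner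
    have h1 : (0:ℝ) ≤ ∑ i, ∑ l, c.1 i l * c.1 i l :=
      Finset.sum_nonneg fun i _ => Finset.sum_nonneg fun l _ => mul_self_nonneg _
    have h2 : (0:ℝ) ≤ ∑ l, c.2 l * c.2 l :=
      Finset.sum_nonneg fun l _ => mul_self_nonneg _
    linarith
  have key : (pInner a b)^2 ≤ pInner a a * pInner b b := by
    have hsum : ∀ c d : Param n, pInner c d = ∑ k : (Fin n × Fin n) ⊕ Fin n,
        (Sum.elim (fun p : Fin n × Fin n => c.1 p.1 p.2) c.2 k) * (Sum.elim (fun p : Fin n × Fin n => d.1 p.1 p.2) d.2 k) := by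
      intro c d
      rw [Fintype.sum_sum_type, Fintype.sum_prod_type]
      rfl
    rw [hsum, hsum, hsum]
    simpa [sq] using Finset.sum_mul_sq_le_sq_mul_sq Finset.univ
      (Sum.elim (fun p : Fin n × Fin n => a.1 p.1 p.2) a.2) (Sum.elim (fun p : Fin n × Fin n => b.1 p.1 p.2) b.2)
  have hna := Real.sqrt_nonneg (pInner a a)
  have h1 : pNorm a * pNorm b = Real.sqrt (pInner a a * pInner b b) := by
    unfold pNorm; rw [Real.sqrt_mul (hself a)]
  rw [h1]
  rw [← Real.sqrt_sq_eq_abs]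
  exact Real.sqrt_le_sqrt key

lemma pNorm_nonneg (a : Param n) : 0 ≤ pNorm a := Real.sqrt_nonneg _

/-- Squared norm of `uvec`. -/
lemma pInner_uvec_self_le (x : Fin n → ℝ) (hx : IsBinary x) (j : Fin n) (m : ℕ)
    (hs : (∑ l, x l * x l) = (m:ℝ)) :
    pInner (uvec x j) (uvec x j) ≤ (m:ℝ)/2 + 1 := by
  have hδ : (1 - 2 * x j) * (1 - 2 * x j) = 1 := by
    rcases hx j with h | h <;> rw [h] <;> ring
  unfold pInner uvec
  simp only [Matrix.of_apply]
  have hb : (∑ l, (if l = j then 1 - 2 * x j else 0) * (if l = j then 1 - 2 * x j else 0))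
      = 1 := by
    rw [Finset.sum_eq_single j]
    · simpa using hδ
    · intro l _ hl; simp [hl]
    · simp
  rw [hb]
  have hW : (∑ i, ∑ l,
      (if i = j ∧ l ≠ j then (1 - 2 * x j) * x l / 2
        else if l = j ∧ i ≠ j then (1 - 2 * x j) * x i / 2 else 0) *
      (if i = j ∧ l ≠ j then (1 - 2 * x j) * x l / 2
        else if l = j ∧ i ≠ j then (1 - 2 * x j) * x i / 2 else 0))
      ≤ (m:ℝ)/2 := by
    have hpt : ∀ i l : Fin n,
        (if i = j ∧ l ≠ j then (1 - 2 * x j) * x l / 2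
          else if l = j ∧ i ≠ j then (1 - 2 * x j) * x i / 2 else 0) *
        (if i = j ∧ l ≠ j then (1 - 2 * x j) * x l / 2
          else if l = j ∧ i ≠ j then (1 - 2 * x j) * x i / 2 else 0)
        = (if i = j ∧ l ≠ j then x l * x l / 4 else 0)
          + (if l = j ∧ i ≠ j then x i * x i / 4 else 0) := by
      intro i l
      by_cases hi : i = j <;> by_cases hl : l = j <;> simp [hi, hl]
      · have h1 : (1 - 2 * x j) * x l / 2 * ((1 - 2 * x j) * x l / 2)
            = (1 - 2 * x j) * (1 - 2 * x j) * (x l * x l) / 4 := by ring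
        rw [h1, hδ]; ring
      · have h1 : (1 - 2 * x j) * x i / 2 * ((1 - 2 * x j) * x i / 2)
            = (1 - 2 * x j) * (1 - 2 * x j) * (x i * x i) / 4 := by ring
        rw [h1, hδ]; ring
    simp_rw [hpt, Finset.sum_add_distrib, ite_and]
    have e1 : (∑ i, ∑ l, if i = j then (if l ≠ j then x l * x l / 4 else 0) else 0)
        = ∑ l, (if l ≠ j then x l * x l / 4 else 0) := by
      rw [Finset.sum_comm]
      refine Finset.sum_congr rfl fun l _ => ?_
      simp [Finset.sum_ite_eq']
    have e2 : (∑ i, ∑ l, if l = j then (if i ≠ j then x i * x i / 4 else 0) else 0)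
        = ∑ i, (if i ≠ j then x i * x i / 4 else 0) := by
      refine Finset.sum_congr rfl fun i _ => ?_
      simp [Finset.sum_ite_eq']
    rw [e1, e2]
    have hb : ∀ l : Fin n, (if l ≠ j then x l * x l / 4 else 0) ≤ x l * x l / 4 := by
      intro l; split
      · exact le_refl _
      · have := mul_self_nonneg (x l); linarith
    have hq : (∑ l, x l * x l / 4) = (m:ℝ)/4 := by
      rw [← Finset.sum_div, hs]
    have b1 : (∑ l, if l ≠ j then x l * x l / 4 else 0) ≤ (m:ℝ)/4 := by
      calc (∑ l, if l ≠ j then x l * x l / 4 else 0) ≤ ∑ l, x l * x l / 4 :=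
            Finset.sum_le_sum fun l _ => hb l
        _ = (m:ℝ)/4 := hq
    linarith
  linarith

lemma sum_sq_binary (x : Fin n → ℝ) (hx : IsBinary x) :
    (∑ l, x l * x l) = (l0norm x : ℝ) := by
  unfold l0norm
  rw [Finset.card_filter, Nat.cast_sum]
  refine Finset.sum_congr rfl fun l _ => ?_
  rcases hx l with h | h <;> simp [h]

/-- If `⟨u_j(x₀), ω⟩ ≥ 1` for all `j`, `θ' ∈ Ψ(Γ)` and
`‖ω − ω'‖ ≤ 1/(4√m)` where `m = ‖x₀‖₀ ≥ 2`, then all energy gaps of `θ = ω`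
on the orbit of `x₀` are at least `1/2`. -/
theorem approx_invariant_orbit_gap {n : ℕ} (Γ : Subgroup (Equiv.Perm (Fin n)))
    (x₀ : Fin n → ℝ) (hx₀ : IsBinary x₀) (m : ℕ) (hm : 2 ≤ m)
    (hm0 : l0norm x₀ = m) (ω ω' : Param n) (hω : IsHopfieldParam ω)
    (hω' : IsHopfieldParam ω')
    (hfeas : ∀ j : Fin n, 1 ≤ pInner (uvec x₀ j) ω)
    (hinv : InvariantUnder (Γ : Set (Equiv.Perm (Fin n))) ω')
    (hclose : pNorm (ω - ω') ≤ 1 / (4 * Real.sqrt m)) :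
    ∀ x ∈ orb (Γ : Set (Equiv.Perm (Fin n))) x₀,
      ∀ j : Fin n, energy (flip x j) ω - energy x ω ≥ 1 / 2 := by
  rintro x ⟨σ, hσ, rfl⟩ j
  set Q := σ.permMatrix ℝ with hQ
  set x := Q.mulVec x₀ with hx
  -- basic facts
  have hxbin : IsBinary x := by
    intro i; rw [hx, permMatrix_mulVec]; exact hx₀ (σ i)
  have hsum₀ : (∑ l, x₀ l * x₀ l) = (m:ℝ) := by
    rw [sum_sq_binary x₀ hx₀, hm0]
  have hsumx : (∑ l, x l * x l) = (m:ℝ) := by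
    rw [hx, ← hsum₀]
    exact Fintype.sum_equiv σ _ _ fun l => by rw [permMatrix_mulVec]
  have hmpos : (0:ℝ) < Real.sqrt m := Real.sqrt_pos.mpr (by positivity)
  -- norm bounds on uvec
  have hub : ∀ (y : Fin n → ℝ) (hy : IsBinary y) (hs : (∑ l, y l * y l) = (m:ℝ))
      (j' : Fin n), pNorm (uvec y j') ≤ Real.sqrt m := by
    intro y hy hs j'
    have h1 := pInner_uvec_self_le y hy j' m hs
    have h2 : (m:ℝ)/2 + 1 ≤ (m:ℝ) := by
      have : (2:ℝ) ≤ m := by exact_mod_cast hm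
      linarith
    unfold pNorm
    exact Real.sqrt_le_sqrt (le_trans h1 h2)
  -- cross-term bounds
  have hcross : ∀ (y : Fin n → ℝ) (hy : IsBinary y) (hs : (∑ l, y l * y l) = (m:ℝ))
      (j' : Fin n), |pInner (uvec y j') (ω - ω')| ≤ 1/4 := by
    intro y hy hs j'
    have h1 := abs_pInner_le (uvec y j') (ω - ω')
    have h2 : pNorm (uvec y j') * pNorm (ω - ω') ≤ Real.sqrt m * (1 / (4 * Real.sqrt m)) := by
      exact mul_le_mul (hub y hy hs j') hclose (pNorm_nonneg _) (Real.sqrt_nonneg _)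
    have h3 : Real.sqrt m * (1 / (4 * Real.sqrt m)) = 1/4 := by
      field_simp
    linarith [h1, h2, h3.le]
  -- energy gap for ω' moves along the orbit
  have horb : energy (flip x j) ω' - energy x ω'
      = energy (flip x₀ (σ j)) ω' - energy x₀ ω' := by
    rw [hx, flip_perm, energy_perm, energy_perm, hinv σ hσ]
  -- assemble
  have e1 : energy (flip x j) ω - energy x ω = pInner (uvec x j) ω :=
    (pInner_uvec x j ω hω).symm
  have e2 : energy (flip x j) ω' - energy x ω' = pInner (uvec x j) ω' :=
    (pInner_uvec x j ω' hω').symm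
  have e3 : energy (flip x₀ (σ j)) ω' - energy x₀ ω' = pInner (uvec x₀ (σ j)) ω' :=
    (pInner_uvec x₀ (σ j) ω' hω').symm
  have c1 := hcross x hxbin hsumx j
  have c2 := hcross x₀ hx₀ hsum₀ (σ j)
  have d1 : pInner (uvec x j) ω = pInner (uvec x j) (ω - ω') + pInner (uvec x j) ω' := by
    rw [pInner_sub_right]; ring
  have d2 : pInner (uvec x₀ (σ j)) ω' = pInner (uvec x₀ (σ j)) ω
      - pInner (uvec x₀ (σ j)) (ω - ω') := by
    rw [pInner_sub_right]; ring
  have hfeas' := hfeas (σ j)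
  have habs1 := abs_le.mp c1
  have habs2 := abs_le.mp c2
  rw [e1, d1]
  have : pInner (uvec x j) ω' = pInner (uvec x₀ (σ j)) ω' := by
    rw [← e2, ← e3, horb]
  rw [this, d2]
  linarith [habs1.1, habs2.2]

end HopfieldPaper
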